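/- Fix N ≥ 1. On ℝ^N × ℝ^N × ℝ^N with coordinates (x,u,v), define the brackets B₁(F,G) = Σᵢ (∂F/∂xᵢ · ∂G/∂uᵢ − ∂G/∂xᵢ · ∂F/∂uᵢ) and B₂(F,G) = Σᵢ (∂F/∂xᵢ · ∂G/∂vᵢ − ∂G/∂xᵢ · ∂F/∂vᵢ) for smooth F,G, and the vector fields Y⁺ = Σ_k u_k ∂/∂v_k, Y⁻ = Σ_k v_k ∂/∂u_k, Y⁰ = Σ_k (u_k ∂/∂u_k − v_k ∂/∂v_k), acting on smooth functions as derivations. Then: (1) [Y⁺,Y⁻] = Y⁰, [Y⁰,Y⁺] = 2Y⁺, [Y⁰,Y⁻] = −2Y⁻ (sl(2) commutation relations); and (2) for all smooth F,G: Y⁺(B₁(F,G)) − B₁(Y⁺F,G) − B₁(F,Y⁺G) = −B₂(F,G), Y⁺(B₂(F,G)) − B₂(Y⁺F,G) − B₂(F,Y⁺G) = 0, Y⁻(B₂(F,G)) − B₂(Y⁻F,G) − B₂(F,Y⁻G) = −B₁(F,G), Y⁻(B₁(F,G)) − B₁(Y⁻F,G) − B₁(F,Y⁻G) = 0, Y⁰(B₁(F,G))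 − B₁(Y⁰F,G) − B₁(F,Y⁰G) = −B₁(F,G), and Y⁰(B₂(F,G)) − B₂(Y⁰F,G) − B₂(F,Y⁰G) = B₂(F,G). -/

import Mathlib

/-- The model space `ℝ^N × ℝ^N × ℝ^N` with coordinates `(x, u, v)`. -/
abbrev Tri (N : ℕ) := (Fin N → ℝ) × (Fin N → ℝ) × (Fin N → ℝ)

/-- Partial derivative `∂f/∂xᵢ`. -/
noncomputable def dX {N : ℕ} (i : Fin N) (f : Tri N → ℝ) (p : Tri N) : ℝ :=
  fderiv ℝ f p ((fun l => if l = i then 1 else 0), 0, 0)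

/-- Partial derivative `∂f/∂uᵢ`. -/
noncomputable def dU {N : ℕ} (i : Fin N) (f : Tri N → ℝ) (p : Tri N) : ℝ :=
  fderiv ℝ f p (0, (fun l => if l = i then 1 else 0), 0)

/-- Partial derivative `∂f/∂vᵢ`. -/
noncomputable def dV {N : ℕ} (i : Fin N) (f : Tri N → ℝ) (p : Tri N) : ℝ :=
  fderiv ℝ f p (0, 0, (fun l => if l = i then 1 else 0))

/-- The canonical bracket `B₁(F,G) = Σᵢ (∂F/∂xᵢ ∂G/∂uᵢ − ∂G/∂xᵢ ∂F/∂uᵢ)`. -/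
noncomputable def bracket1 {N : ℕ} (F G : Tri N → ℝ) (p : Tri N) : ℝ :=
  ∑ i, (dX i F p * dU i G p - dX i G p * dU i F p)

/-- The canonical bracket `B₂(F,G) = Σᵢ (∂F/∂xᵢ ∂G/∂vᵢ − ∂G/∂xᵢ ∂F/∂vᵢ)`. -/
noncomputable def bracket2 {N : ℕ} (F G : Tri N → ℝ) (p : Tri N) : ℝ :=
  ∑ i, (dX i F p * dV i G p - dX i G p * dV i F p)

/-- The vector field `Y⁺ = Σ_k u_k ∂/∂v_k` acting as a derivation. -/
noncomputable def Yplus {N : ℕ} (F : Tri N → ℝ) (p : Tri N) : ℝ :=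
  ∑ k, p.2.1 k * dV k F p

/-- The vector field `Y⁻ = Σ_k v_k ∂/∂u_k` acting as a derivation. -/
noncomputable def Yminus {N : ℕ} (F : Tri N → ℝ) (p : Tri N) : ℝ :=
  ∑ k, p.2.2 k * dU k F p

/-- The vector field `Y⁰ = Σ_k (u_k ∂/∂u_k − v_k ∂/∂v_k)` acting as a derivation. -/
noncomputable def Yzero {N : ℕ} (F : Tri N → ℝ) (p : Tri N) : ℝ :=
  ∑ k, (p.2.1 k * dU k F p - p.2.2 k * dV k F p)

/-!
Each of `Y⁺, Y⁻, Y⁰` is the derivation `F ↦ (q ↦ DF(q)(A q))` along a linear vector field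
`A (x, u, v) = (0, g (u, v))` with `g` a `2 × 2` matrix (`E₂₁`, `E₁₂`, `diag(1, -1)`). By symmetry
of second derivatives, the commutator of two such derivations is the derivation along `BA - AB`,
so the commutation relations reduce to matrix identities. For a bracket built from constant
directions `cᵢ, dᵢ`, the same symmetry cancels all second-derivative terms in
`Y_A B(F,G) - B(Y_A F, G) - B(F, Y_A G)`, leaving minus the brackets with directions `A cᵢ`
and `A dᵢ`. As `A` kills the `x`-directions and mixes the `u`- and `v`-directions through `g`,
this gives `L_Y Bᵃ = -∑_b g_{ba} Bᵇ`.
-/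

section LinearVectorField

variable {E : Type*} [NormedAddCommGroup E] [NormedSpace ℝ E] {F G : E → ℝ}

noncomputable def derivAlong (A : E →L[ℝ] E) (f : E → ℝ) (p : E) : ℝ :=
  fderiv ℝ f p (A p)

theorem derivAlong_smul (c : ℝ) (A : E →L[ℝ] E) (f : E → ℝ) (p : E) :
    derivAlong (c • A) f p = c * derivAlong A f p := by
  simp [derivAlong]

theorem ContDiff.differentiable_fderiv_of_two (hF : ContDiff ℝ 2 F) :
    Differentiable ℝ (fderiv ℝ F) :=
  (hF.fderiv_right (m := 1) (by norm_num)).differentiable one_ne_zero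

theorem ContDiff.fderiv_fderiv_apply_comm (hF : ContDiff ℝ 2 F) (p v w : E) :
    fderiv ℝ (fderiv ℝ F) p v w = fderiv ℝ (fderiv ℝ F) p w v :=
  (hF.contDiffAt.isSymmSndFDerivAt (by simp)).eq v w

theorem fderiv_derivAlong (hF : ContDiff ℝ 2 F) (B : E →L[ℝ] E) (p w : E) :
    fderiv ℝ (derivAlong B F) p w = fderiv ℝ (fderiv ℝ F) p w (B p) + fderiv ℝ F p (B w) := by
  unfold derivAlong
  rw [fderiv_clm_apply (hF.differentiable_fderiv_of_two p) B.differentiableAt]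
  simp [add_comm]

theorem ContDiff.fderiv_fderiv_apply_const (hF : ContDiff ℝ 2 F) (v p w : E) :
    fderiv ℝ (fun q => fderiv ℝ F q v) p w = fderiv ℝ (fderiv ℝ F) p w v := by
  rw [fderiv_clm_apply (hF.differentiable_fderiv_of_two p) (differentiableAt_const v)]
  simp

theorem derivAlong_derivAlong_sub (hF : ContDiff ℝ 2 F) (A B : E →L[ℝ] E) (p : E) :
    derivAlong A (derivAlong B F) p - derivAlong B (derivAlong A F) p
      = fderiv ℝ F p (B (A p) - A (B p)) := by
  rw [derivAlong, derivAlong, fderiv_derivAlong hF, fderiv_derivAlong hF,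
    hF.fderiv_fderiv_apply_comm p (A p), map_sub]
  ring

section PairBracket

variable {ι : Type*} [Fintype ι]

noncomputable def pairBracket (c d : ι → E) (F G : E → ℝ) (p : E) : ℝ :=
  ∑ i, (fderiv ℝ F p (c i) * fderiv ℝ G p (d i) - fderiv ℝ G p (c i) * fderiv ℝ F p (d i))

theorem pairBracket_zero_left (d : ι → E) (F G : E → ℝ) (p : E) :
    pairBracket 0 d F G p = 0 := by
  simp [pairBracket]

theorem pairBracket_smul_add_smul_right (c d d' : ι → E) (a b : ℝ) (F G : E → ℝ) (p : E) :
    pairBracket c (fun i => a • d i + b • d' i) F G p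
      = a * pairBracket c d F G p + b * pairBracket c d' F G p := by
  simp only [pairBracket, map_add, map_smul, smul_eq_mul, Finset.mul_sum,
    ← Finset.sum_add_distrib]
  exact Finset.sum_congr rfl fun i _ => by ring

theorem fderiv_pairBracket (hF : ContDiff ℝ 2 F) (hG : ContDiff ℝ 2 G) (c d : ι → E) (p w : E) :
    fderiv ℝ (pairBracket c d F G) p w
      = ∑ i, (fderiv ℝ (fderiv ℝ F) p w (c i) * fderiv ℝ G p (d i)
          + fderiv ℝ F p (c i) * fderiv ℝ (fderiv ℝ G) p w (d i)
          - (fderiv ℝ (fderiv ℝ G) p w (c i) * fderiv ℝ F p (d i)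
          + fderiv ℝ G p (c i) * fderiv ℝ (fderiv ℝ F) p w (d i))) := by
  have dF (v : E) : DifferentiableAt ℝ (fun q => fderiv ℝ F q v) p :=
    (hF.differentiable_fderiv_of_two p).clm_apply (differentiableAt_const v)
  have dG (v : E) : DifferentiableAt ℝ (fun q => fderiv ℝ G q v) p :=
    (hG.differentiable_fderiv_of_two p).clm_apply (differentiableAt_const v)
  unfold pairBracket
  rw [fderiv_fun_sum fun i _ => ((dF (c i)).fun_mul (dG (d i))).fun_sub
    ((dG (c i)).fun_mul (dF (d i))), sum_apply]
  refine Finset.sum_congr rfl fun i _ => ?_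
  rw [fderiv_fun_sub ((dF (c i)).fun_mul (dG (d i))) ((dG (c i)).fun_mul (dF (d i))),
    fderiv_fun_mul (dF (c i)) (dG (d i)), fderiv_fun_mul (dG (c i)) (dF (d i))]
  simp only [sub_apply, add_apply, smul_apply, smul_eq_mul, hF.fderiv_fderiv_apply_const,
    hG.fderiv_fderiv_apply_const]
  ring

theorem derivAlong_pairBracket (hF : ContDiff ℝ 2 F) (hG : ContDiff ℝ 2 G) (A : E →L[ℝ] E)
    (c d : ι → E) (p : E) :
    derivAlong A (pairBracket c d F G) p - pairBracket c d (derivAlong A F) G p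
        - pairBracket c d F (derivAlong A G) p
      = -(pairBracket (A ∘ c) d F G p + pairBracket c (A ∘ d) F G p) := by
  rw [derivAlong, fderiv_pairBracket hF hG]
  simp only [pairBracket, fderiv_derivAlong hF, fderiv_derivAlong hG, Function.comp_apply,
    ← Finset.sum_sub_distrib, ← Finset.sum_add_distrib, ← Finset.sum_neg_distrib]
  refine Finset.sum_congr rfl fun i _ => ?_
  rw [hF.fderiv_fderiv_apply_comm p (c i), hF.fderiv_fderiv_apply_comm p (d i),
    hG.fderiv_fderiv_apply_comm p (c i), hG.fderiv_fderiv_apply_comm p (d i)]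
  ring

end PairBracket

end LinearVectorField

namespace Tri

variable {N : ℕ}

def eX (i : Fin N) : Tri N := (fun l => if l = i then 1 else 0, 0, 0)

def eU (i : Fin N) : Tri N := (0, fun l => if l = i then 1 else 0, 0)

def eV (i : Fin N) : Tri N := (0, 0, fun l => if l = i then 1 else 0)

theorem bracket1_eq_pairBracket : (bracket1 : (Tri N → ℝ) → _) = pairBracket eX eU := rfl

theorem bracket2_eq_pairBracket : (bracket2 : (Tri N → ℝ) → _) = pairBracket eX eV := rfl

theorem clm_apply_zero_prod (L : Tri N →L[ℝ] ℝ) (a b : Fin N → ℝ) :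
    L (0, a, b) = ∑ k, (a k * L (eU k) + b k * L (eV k)) := by
  have hsum : ((0, a, b) : Tri N) = ∑ k, (a k • eU k + b k • eV k) := by
    ext l <;> simp [eU, eV, Prod.fst_sum, Prod.snd_sum, Finset.sum_apply]
  simp [hsum, map_sum]

noncomputable def gl2Field (g : Matrix (Fin 2) (Fin 2) ℝ) : Tri N →L[ℝ] Tri N :=
  LinearMap.toContinuousLinearMap
    { toFun := fun p => (0, g 0 0 • p.2.1 + g 0 1 • p.2.2, g 1 0 • p.2.1 + g 1 1 • p.2.2)
      map_add' := fun p q => by ext <;> simp <;> ring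
      map_smul' := fun c p => by ext <;> simp <;> ring }

theorem gl2Field_apply (g : Matrix (Fin 2) (Fin 2) ℝ) (p : Tri N) :
    gl2Field g p = (0, g 0 0 • p.2.1 + g 0 1 • p.2.2, g 1 0 • p.2.1 + g 1 1 • p.2.2) := rfl

theorem gl2Field_smul (c : ℝ) (g : Matrix (Fin 2) (Fin 2) ℝ) :
    gl2Field (N := N) (c • g) = c • gl2Field g := by
  ext p <;> simp [gl2Field_apply, smul_smul]

theorem gl2Field_sub_gl2Field (g h : Matrix (Fin 2) (Fin 2) ℝ) (p : Tri N) :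
    gl2Field h (gl2Field g p) - gl2Field g (gl2Field h p) = gl2Field (h * g - g * h) p := by
  ext l <;> simp [gl2Field_apply, Matrix.mul_apply, Fin.sum_univ_two] <;> ring

theorem gl2Field_comp_eX (g : Matrix (Fin 2) (Fin 2) ℝ) : ⇑(gl2Field g) ∘ eX (N := N) = 0 := by
  funext i
  simp [gl2Field_apply, eX]

theorem gl2Field_comp_eU (g : Matrix (Fin 2) (Fin 2) ℝ) :
    ⇑(gl2Field g) ∘ eU (N := N) = fun i => g 0 0 • eU i + g 1 0 • eV i := by
  funext i
  ext l <;> simp [gl2Field_apply, eU, eV]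

theorem gl2Field_comp_eV (g : Matrix (Fin 2) (Fin 2) ℝ) :
    ⇑(gl2Field g) ∘ eV (N := N) = fun i => g 0 1 • eU i + g 1 1 • eV i := by
  funext i
  ext l <;> simp [gl2Field_apply, eU, eV]

theorem Yplus_eq_derivAlong :
    (Yplus : (Tri N → ℝ) → Tri N → ℝ) = derivAlong (gl2Field !![0, 0; 1, 0]) := by
  funext F p
  rw [derivAlong, gl2Field_apply, clm_apply_zero_prod]
  simp [Yplus, dV, eV]

theorem Yminus_eq_derivAlong :
    (Yminus : (Tri N → ℝ) → Tri N → ℝ) = derivAlong (gl2Field !![0, 1; 0, 0]) := by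
  funext F p
  rw [derivAlong, gl2Field_apply, clm_apply_zero_prod]
  simp [Yminus, dU, eU]

theorem Yzero_eq_derivAlong :
    (Yzero : (Tri N → ℝ) → Tri N → ℝ) = derivAlong (gl2Field !![1, 0; 0, -1]) := by
  funext F p
  rw [derivAlong, gl2Field_apply, clm_apply_zero_prod]
  simp [Yzero, dU, dV, eU, eV, sub_eq_add_neg]

variable {F G : Tri N → ℝ}

theorem derivAlong_gl2Field_derivAlong_sub (hF : ContDiff ℝ 2 F) (g h : Matrix (Fin 2) (Fin 2) ℝ)
    (p : Tri N) :
    derivAlong (gl2Field g) (derivAlong (gl2Field h) F) p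
        - derivAlong (gl2Field h) (derivAlong (gl2Field g) F) p
      = derivAlong (gl2Field (h * g - g * h)) F p := by
  rw [derivAlong_derivAlong_sub hF, gl2Field_sub_gl2Field, derivAlong]

theorem derivAlong_gl2Field_bracket1 (hF : ContDiff ℝ 2 F) (hG : ContDiff ℝ 2 G)
    (g : Matrix (Fin 2) (Fin 2) ℝ) (p : Tri N) :
    derivAlong (gl2Field g) (bracket1 F G) p - bracket1 (derivAlong (gl2Field g) F) G p
        - bracket1 F (derivAlong (gl2Field g) G) p
      = -(g 0 0 * bracket1 F G p + g 1 0 * bracket2 F G p) := by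
  rw [bracket1_eq_pairBracket, bracket2_eq_pairBracket, derivAlong_pairBracket hF hG,
    gl2Field_comp_eX, gl2Field_comp_eU, pairBracket_zero_left, pairBracket_smul_add_smul_right,
    zero_add]

theorem derivAlong_gl2Field_bracket2 (hF : ContDiff ℝ 2 F) (hG : ContDiff ℝ 2 G)
    (g : Matrix (Fin 2) (Fin 2) ℝ) (p : Tri N) :
    derivAlong (gl2Field g) (bracket2 F G) p - bracket2 (derivAlong (gl2Field g) F) G p
        - bracket2 F (derivAlong (gl2Field g) G) p
      = -(g 0 1 * bracket1 F G p + g 1 1 * bracket2 F G p) := by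
  rw [bracket1_eq_pairBracket, bracket2_eq_pairBracket, derivAlong_pairBracket hF hG,
    gl2Field_comp_eX, gl2Field_comp_eV, pairBracket_zero_left, pairBracket_smul_add_smul_right,
    zero_add]

end Tri

open Tri

theorem sl2_action_on_canonical_brackets_general (N : ℕ) :
    ((∀ F : Tri N → ℝ, ContDiff ℝ (⊤ : ℕ∞) F → ∀ p : Tri N,
        Yplus (fun q => Yminus F q) p - Yminus (fun q => Yplus F q) p = Yzero F p) ∧
     (∀ F : Tri N → ℝ, ContDiff ℝ (⊤ : ℕ∞) F → ∀ p : Tri N,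
        Yzero (fun q => Yplus F q) p - Yplus (fun q => Yzero F q) p = 2 * Yplus F p) ∧
     (∀ F : Tri N → ℝ, ContDiff ℝ (⊤ : ℕ∞) F → ∀ p : Tri N,
        Yzero (fun q => Yminus F q) p - Yminus (fun q => Yzero F q) p
          = -(2 * Yminus F p))) ∧
    (∀ F G : Tri N → ℝ, ContDiff ℝ (⊤ : ℕ∞) F → ContDiff ℝ (⊤ : ℕ∞) G → ∀ p : Tri N,
        (Yplus (fun q => bracket1 F G q) p
            - bracket1 (fun q => Yplus F q) G p
            - bracket1 F (fun q => Yplus G q) p = - bracket2 F G p) ∧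
        (Yplus (fun q => bracket2 F G q) p
            - bracket2 (fun q => Yplus F q) G p
            - bracket2 F (fun q => Yplus G q) p = 0) ∧
        (Yminus (fun q => bracket2 F G q) p
            - bracket2 (fun q => Yminus F q) G p
            - bracket2 F (fun q => Yminus G q) p = - bracket1 F G p) ∧
        (Yminus (fun q => bracket1 F G q) p
            - bracket1 (fun q => Yminus F q) G p
            - bracket1 F (fun q => Yminus G q) p = 0) ∧
        (Yzero (fun q => bracket1 F G q) p
            - bracket1 (fun q => Yzero F q) G p
            - bracket1 F (fun q => Yzero G q) p = - bracket1 F G p) ∧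
        (Yzero (fun q => bracket2 F G q) p
            - bracket2 (fun q => Yzero F q) G p
            - bracket2 F (fun q => Yzero G q) p = bracket2 F G p)) := by
  have C2 {F : Tri N → ℝ} (hF : ContDiff ℝ (⊤ : ℕ∞) F) : ContDiff ℝ 2 F := hF.of_le (by norm_cast)
  rw [Yplus_eq_derivAlong, Yminus_eq_derivAlong, Yzero_eq_derivAlong]
  refine ⟨⟨fun F hF p => ?_, fun F hF p => ?_, fun F hF p => ?_⟩, fun F G hF hG p => ?_⟩
  · rw [derivAlong_gl2Field_derivAlong_sub (C2 hF)]
    congr 2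
    ext i j
    fin_cases i <;> fin_cases j <;> norm_num
  · rw [derivAlong_gl2Field_derivAlong_sub (C2 hF), ← derivAlong_smul,
      ← gl2Field_smul]
    congr 2
    ext i j
    fin_cases i <;> fin_cases j <;> norm_num
  · rw [derivAlong_gl2Field_derivAlong_sub (C2 hF), ← neg_mul, ← derivAlong_smul,
      ← gl2Field_smul]
    congr 2
    ext i j
    fin_cases i <;> fin_cases j <;> norm_num
  · simp only [derivAlong_gl2Field_bracket1 (C2 hF) (C2 hG),
      derivAlong_gl2Field_bracket2 (C2 hF) (C2 hG)]
    norm_num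

/-- The vector fields `Y⁺ = u·∂_v`, `Y⁻ = v·∂_u`, `Y⁰ = u·∂_u − v·∂_v`
satisfy the `sl(2)` commutation relations `[Y⁺,Y⁻] = Y⁰`, `[Y⁰,Y⁺] = 2Y⁺`,
`[Y⁰,Y⁻] = −2Y⁻`, and act on the canonical pair of brackets `B₁`, `B₂` by
`L_{Y⁺}B₁ = −B₂`, `L_{Y⁺}B₂ = 0`, `L_{Y⁻}B₂ = −B₁`, `L_{Y⁻}B₁ = 0`,
`L_{Y⁰}B₁ = −B₁`, `L_{Y⁰}B₂ = B₂`, which is the infinitesimal `Sp(2)`-covariance of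
the canonical brackets. -/
theorem sl2_action_on_canonical_brackets (N : ℕ) (hN : 1 ≤ N) :
    ((∀ F : Tri N → ℝ, ContDiff ℝ (⊤ : ℕ∞) F → ∀ p : Tri N,
        Yplus (fun q => Yminus F q) p - Yminus (fun q => Yplus F q) p = Yzero F p) ∧
     (∀ F : Tri N → ℝ, ContDiff ℝ (⊤ : ℕ∞) F → ∀ p : Tri N,
        Yzero (fun q => Yplus F q) p - Yplus (fun q => Yzero F q) p = 2 * Yplus F p) ∧
     (∀ F : Tri N → ℝ, ContDiff ℝ (⊤ : ℕ∞) F → ∀ p : Tri N,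
        Yzero (fun q => Yminus F q) p - Yminus (fun q => Yzero F q) p
          = -(2 * Yminus F p))) ∧
    (∀ F G : Tri N → ℝ, ContDiff ℝ (⊤ : ℕ∞) F → ContDiff ℝ (⊤ : ℕ∞) G → ∀ p : Tri N,
        (Yplus (fun q => bracket1 F G q) p
            - bracket1 (fun q => Yplus F q) G p
            - bracket1 F (fun q => Yplus G q) p = - bracket2 F G p) ∧
        (Yplus (fun q => bracket2 F G q) p
            - bracket2 (fun q => Yplus F q) G p
            - bracket2 F (fun q => Yplus G q) p = 0) ∧
        (Yminus (fun q => bracket2 F G q) p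
            - bracket2 (fun q => Yminus F q) G p
            - bracket2 F (fun q => Yminus G q) p = - bracket1 F G p) ∧
        (Yminus (fun q => bracket1 F G q) p
            - bracket1 (fun q => Yminus F q) G p
            - bracket1 F (fun q => Yminus G q) p = 0) ∧
        (Yzero (fun q => bracket1 F G q) p
            - bracket1 (fun q => Yzero F q) G p
            - bracket1 F (fun q => Yzero G q) p = - bracket1 F G p) ∧
        (Yzero (fun q => bracket2 F G q) p
            - bracket2 (fun q => Yzero F q) G p
            - bracket2 F (fun q => Yzero G q) p = bracket2 F G p)) :=
  sl2_action_on_canonical_brackets_general N
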